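/- Let (X,d) be a compact metric space and f : X → X a homeomorphism with the two-sided limit shadowing property. Then for every n ∈ ℤ with n ≠ 0, the homeomorphism f^n also has the two-sided limit shadowing property. -/

import Mathlib

/-! For `n > 0`, a pseudo-orbit `(x i)` of `f^n` is refined to a pseudo-orbit of `f`
by inserting the `f`-orbit segment `x i, f (x i), …, f^(n-1) (x i)` between `x i` and `x (i+1)`;
a point shadowing the refined sequence shadows `(x i)` under `f^n`. For `n < 0` it suffices to
treat `f⁻¹`: reversing time turns a pseudo-orbit of `f⁻¹` into one of `f`, because the uniform
continuity of `f` on the compact space converts `d(f⁻¹(x i), x (i-1)) → 0` into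
`d(x i, f (x (i-1))) → 0`. -/

open Filter Topology

variable {X : Type*} [MetricSpace X]

/-- A two-sided limit pseudo-orbit: `d(g(x i), x (i+1)) → 0` as `|i| → ∞`. -/
def IsTwoSidedLimitPseudoOrbit (g : X ≃ X) (x : ℤ → X) : Prop :=
  Tendsto (fun i : ℤ => dist (g (x i)) (x (i + 1))) cofinite (𝓝 0)

/-- `g` has the two-sided limit shadowing property: every two-sided limit pseudo-orbit
is two-sided limit shadowed (`d(g^i(y), x i) → 0` as `|i| → ∞`). -/
def TwoSidedLimitShadowing (g : X ≃ X) : Prop :=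
  ∀ x : ℤ → X, IsTwoSidedLimitPseudoOrbit g x →
    ∃ y : X, Tendsto (fun i : ℤ => dist ((g ^ i) y) (x i)) cofinite (𝓝 0)

lemma Int.tendsto_ediv_cofinite {n : ℤ} (hn : 0 < n) :
    Tendsto (· / n) cofinite cofinite :=
  .cofinite_of_finite_preimage_singleton fun b =>
    ((Set.finite_Ico (n * b) (n * b + n)).subset fun k (hk : k / n = b) =>
      hk ▸ ⟨Int.mul_ediv_self_le hn.ne', Int.lt_mul_ediv_self_add hn⟩).to_subtype

lemma UniformContinuous.tendsto_dist_comp {ι Y Z : Type*} [PseudoMetricSpace Y]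
    [PseudoMetricSpace Z] {l : Filter ι} {F : Y → Z} {a b : ι → Y} (hF : UniformContinuous F)
    (h : Tendsto (fun i => dist (a i) (b i)) l (𝓝 0)) :
    Tendsto (fun i => dist (F (a i)) (F (b i))) l (𝓝 0) :=
  tendsto_uniformity_iff_dist_tendsto_zero (f := fun i => (F (a i), F (b i))) |>.1 <|
    Tendsto.comp hF <| tendsto_uniformity_iff_dist_tendsto_zero (f := fun i => (a i, b i)) |>.2 h

def orbitInterpolation {α : Type*} (g : α ≃ α) (n : ℤ) (x : ℤ → α) (k : ℤ) : α :=
  (g ^ (k % n)) (x (k / n))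

lemma orbitInterpolation_mul {α : Type*} {g : α ≃ α} {n : ℤ} {x : ℤ → α} (hn : n ≠ 0) (i : ℤ) :
    orbitInterpolation g n x (n * i) = x i := by
  simp [orbitInterpolation, Int.mul_ediv_cancel_left _ hn]

section Iterates

variable {g : X ≃ X} {n : ℤ} {x : ℤ → X}

lemma dist_orbitInterpolation_succ_le (hn : 0 < n) (k : ℤ) :
    dist (g (orbitInterpolation g n x k)) (orbitInterpolation g n x (k + 1)) ≤
      dist ((g ^ n) (x (k / n))) (x (k / n + 1)) := by
  have hk := Int.mul_ediv_add_emod k n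
  have hr₀ := Int.emod_nonneg k hn.ne'
  have hr₁ := Int.emod_lt_of_pos k hn
  have hg : g (orbitInterpolation g n x k) = (g ^ (k % n + 1)) (x (k / n)) := by
    rw [orbitInterpolation, add_comm, zpow_one_add, Equiv.Perm.mul_apply]
  rw [hg]
  rcases (show k % n + 1 ≤ n by omega).eq_or_lt with hlast | hinner
  · obtain ⟨hq, hr⟩ : (k + 1) / n = k / n + 1 ∧ (k + 1) % n = 0 :=
      (Int.ediv_emod_unique hn).2 ⟨by linarith, le_rfl, hn⟩
    simp [orbitInterpolation, hq, hr, hlast]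
  · obtain ⟨hq, hr⟩ : (k + 1) / n = k / n ∧ (k + 1) % n = k % n + 1 :=
      (Int.ediv_emod_unique hn).2 ⟨by linarith, by omega, hinner⟩
    simp [orbitInterpolation, hq, hr]

lemma IsTwoSidedLimitPseudoOrbit.orbitInterpolation (hn : 0 < n)
    (hx : IsTwoSidedLimitPseudoOrbit (g ^ n) x) :
    IsTwoSidedLimitPseudoOrbit g (orbitInterpolation g n x) :=
  squeeze_zero (fun _ => dist_nonneg) (dist_orbitInterpolation_succ_le hn)
    (hx.comp (Int.tendsto_ediv_cofinite hn))

lemma TwoSidedLimitShadowing.zpow_of_pos (h : TwoSidedLimitShadowing g) (hn : 0 < n) :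
    TwoSidedLimitShadowing (g ^ n) := by
  intro x hx
  obtain ⟨y, hy⟩ := h _ (hx.orbitInterpolation hn)
  refine ⟨y, ?_⟩
  have hsub := hy.comp (mul_right_injective₀ hn.ne').tendsto_cofinite
  simpa [Function.comp_def, ← zpow_mul, orbitInterpolation_mul hn.ne'] using hsub

lemma IsTwoSidedLimitPseudoOrbit.comp_neg (hg : UniformContinuous g)
    (hx : IsTwoSidedLimitPseudoOrbit g⁻¹ x) :
    IsTwoSidedLimitPseudoOrbit g (fun i => x (-i)) := by
  have hshift : Function.Injective fun i : ℤ => -i - 1 := fun a b hab => by simpa using hab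
  have hfwd := hg.tendsto_dist_comp (hx.comp hshift.tendsto_cofinite)
  refine hfwd.congr fun i => ?_
  simp [dist_comm, neg_add_eq_sub]

lemma TwoSidedLimitShadowing.inv (hg : UniformContinuous g) (h : TwoSidedLimitShadowing g) :
    TwoSidedLimitShadowing g⁻¹ := by
  intro x hx
  obtain ⟨y, hy⟩ := h _ (hx.comp_neg hg)
  refine ⟨y, ?_⟩
  simpa [Function.comp_def, ← zpow_neg] using hy.comp neg_injective.tendsto_cofinite

end Iterates

/-- If a homeomorphism of a compact metric space has the two-sided limit shadowing
property, then so does every nonzero (positive or negative) iterate `f^n`. -/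
theorem stmt6 [CompactSpace X] (f : X ≃ₜ X)
    (h : TwoSidedLimitShadowing f.toEquiv) (n : ℤ) (hn : n ≠ 0) :
    TwoSidedLimitShadowing (f.toEquiv ^ n) := by
  rcases hn.lt_or_gt with hneg | hpos
  · have hf : UniformContinuous f := CompactSpace.uniformContinuous_of_continuous f.continuous
    simpa [inv_zpow, zpow_neg] using (h.inv hf).zpow_of_pos (neg_pos.2 hneg)
  · exact h.zpow_of_pos hpos
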